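/- For every nonnegative integer n, p_2(n) = \sum s(m^2) p(i) p(j) p(k), where the sum is over all quadruples of nonnegative integers (m, i, j, k) with m^2 + i + j + k = n, and where s(0) = 1 and s(m^2) = 2(-1)^m for m \ge 1. -/

import Mathlib

open Finset

def p (n : ℕ) : ℕ := Fintype.card (Nat.Partition n)

def p₂ (n : ℕ) : ℕ :=
  ∑ ij ∈ (range (n + 1) ×ˢ range (n + 1)).filter (fun ij => ij.1 + 2 * ij.2 = n),
    p ij.1 * p ij.2

/-- `s m` encodes the value `s(m²)`: `s(0) = 1` and `s(m²) = 2 * (-1)^m` for `m ≥ 1`. -/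
def s (m : ℕ) : ℤ := if m = 0 then 1 else 2 * (-1) ^ m

/-!
Write `θ = ∑ s(m) q^{m²}`, `E = ∏ (1 - q^n)` and `P = ∑ p(n) q^n = 1 / E`. Gauss's identity
`θ · E(q²) = E²` gives `θ · P³ = P · P(q²)`, and the coefficients of `q^n` on the two sides
are the two sides of the theorem.

Gauss's identity is the limit `N → ∞` of its finite form
`∑_{|j| ≤ N} (-1)^j q^{j²} [2N, N + j]_{q²} = ∏_{i < N} (1 - q^{2i+1})²`, which follows by
induction on the row of Gaussian binomials from the two `q`-Pascal rules. In the limit,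
`[2N, N + j]_{q²} · (q²; q²)_N ≡ 1` modulo `q^{2(N - |j|) + 2}`, because all `q`-Pochhammer
symbols `(q²; q²)_m` with `m ≥ T` agree modulo `q^{2T + 2}`.
-/

section QBinomial

variable {A : Type*} [CommRing A] (q : A)

def qPochhammer (n : ℕ) : A := ∏ i ∈ range n, (1 - q ^ (i + 1))

def qBinom : ℕ → ℕ → A
  | _, 0 => 1
  | 0, _ + 1 => 0
  | n + 1, k + 1 => qBinom n k + q ^ (k + 1) * qBinom n (k + 1)

variable {q}

@[simp] lemma qBinom_zero_right (n : ℕ) : qBinom q n 0 = 1 := by cases n <;> rfl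

@[simp] lemma qBinom_zero_succ (k : ℕ) : qBinom q 0 (k + 1) = 0 := rfl

lemma qBinom_succ_succ (n k : ℕ) :
    qBinom q (n + 1) (k + 1) = qBinom q n k + q ^ (k + 1) * qBinom q n (k + 1) := rfl

lemma qBinom_eq_zero_of_lt {n k : ℕ} (h : n < k) : qBinom q n k = 0 := by
  induction n generalizing k with
  | zero => obtain ⟨k, rfl⟩ := Nat.exists_eq_add_of_lt h; rfl
  | succ n ih =>
    obtain ⟨k, rfl⟩ : ∃ k', k = k' + 1 := ⟨k - 1, by omega⟩
    rw [qBinom_succ_succ, ih (by omega), ih (by omega), mul_zero, add_zero]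

@[simp] lemma qBinom_self (n : ℕ) : qBinom q n n = 1 := by
  induction n with
  | zero => rfl
  | succ n ih => rw [qBinom_succ_succ, ih, qBinom_eq_zero_of_lt (by omega), mul_zero, add_zero]

lemma qBinom_succ_succ' (n k : ℕ) :
    qBinom q (n + 1) (k + 1) = q ^ (n - k) * qBinom q n k + qBinom q n (k + 1) := by
  induction n generalizing k with
  | zero => cases k <;> simp [qBinom_succ_succ]
  | succ n ih =>
    rw [qBinom_succ_succ (n + 1)]
    rcases k with _ | k
    · have h₁ := ih 0
      have h₂ := qBinom_succ_succ (q := q) n 0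
      simp only [qBinom_zero_right, Nat.sub_zero, zero_add, pow_one] at h₁ h₂ ⊢
      linear_combination q * h₁ - h₂
    · rw [Nat.add_sub_add_right]
      have key : q ^ (k + 2) * (q ^ (n - (k + 1)) * qBinom q n (k + 1)) =
          q ^ (n - k) * (q ^ (k + 1) * qBinom q n (k + 1)) := by
        rcases lt_or_ge n (k + 1) with h | h
        · simp [qBinom_eq_zero_of_lt h]
        · rw [← mul_assoc, ← mul_assoc, ← pow_add, ← pow_add]; congr 2; omega
      linear_combination ih k + q ^ (k + 2) * ih (k + 1) -
        q ^ (n - k) * qBinom_succ_succ (q := q) n k - qBinom_succ_succ (q := q) n (k + 1) + key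

@[simp] lemma qPochhammer_zero : qPochhammer q 0 = 1 := prod_range_zero _

lemma qPochhammer_succ (n : ℕ) : qPochhammer q (n + 1) = qPochhammer q n * (1 - q ^ (n + 1)) :=
  prod_range_succ _ _

lemma qBinom_mul_qPochhammer {n k : ℕ} (h : k ≤ n) :
    qBinom q n k * (qPochhammer q k * qPochhammer q (n - k)) = qPochhammer q n := by
  induction n generalizing k with
  | zero =>
    obtain rfl : k = 0 := by omega
    simp
  | succ n ih =>
    rcases k with _ | k
    · simp
    rw [Nat.add_sub_add_right, qBinom_succ_succ, qPochhammer_succ, qPochhammer_succ]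
    rcases (Nat.lt_succ_iff.mp h).lt_or_eq with hk | rfl
    · obtain ⟨m, hm⟩ : ∃ m, n - k = m + 1 := ⟨n - k - 1, by omega⟩
      have h₁ := ih (k := k) (by omega)
      have h₂ := ih (k := k + 1) hk
      rw [hm, qPochhammer_succ] at h₁ ⊢
      rw [show n - (k + 1) = m by omega, qPochhammer_succ] at h₂
      have hpow : q ^ (k + 1) * q ^ (m + 1) = q ^ (n + 1) := by rw [← pow_add]; congr 1; omega
      linear_combination (1 - q ^ (k + 1)) * h₁ + q ^ (k + 1) * (1 - q ^ (m + 1)) * h₂ -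
        qPochhammer q n * hpow
    · simp [qBinom_eq_zero_of_lt (Nat.lt_succ_self k)]

lemma sum_mul_qBinom_succ (f : ℕ → A) (n : ℕ) :
    ∑ k ∈ range (n + 2), f k * qBinom q (n + 1) k =
      ∑ k ∈ range (n + 1), (f (k + 1) + q ^ k * f k) * qBinom q n k := by
  have shift := sum_range_succ' (fun k ↦ q ^ k * f k * qBinom q n k) (n + 1)
  rw [sum_range_succ, qBinom_eq_zero_of_lt (lt_add_one n)] at shift
  simp only [sum_range_succ' _ (n + 1), qBinom_succ_succ, qBinom_zero_right, add_mul, mul_add,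
    sum_add_distrib]
  simp only [pow_zero, mul_zero, add_zero, one_mul, qBinom_zero_right, mul_one] at shift
  simp only [mul_left_comm (f _)]
  linear_combination (norm := ring_nf) (-1 : A) * shift

lemma sum_mul_qBinom_succ' (f : ℕ → A) (n : ℕ) :
    ∑ k ∈ range (n + 2), f k * qBinom q (n + 1) k =
      ∑ k ∈ range (n + 1), (q ^ (n - k) * f (k + 1) + f k) * qBinom q n k := by
  have shift := sum_range_succ' (fun k ↦ f k * qBinom q n k) (n + 1)
  rw [sum_range_succ, qBinom_eq_zero_of_lt (lt_add_one n)] at shift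
  simp only [sum_range_succ' _ (n + 1), qBinom_succ_succ', qBinom_zero_right, add_mul, mul_add,
    sum_add_distrib]
  simp only [mul_zero, add_zero, qBinom_zero_right, mul_one] at shift
  simp only [mul_left_comm (f _)]
  linear_combination (norm := ring_nf) (-1 : A) * shift

lemma qPochhammer_smodEq {T m : ℕ} (h : T ≤ m) :
    qPochhammer q m ≡ qPochhammer q T [SMOD Ideal.span {q ^ (T + 1)}] := by
  rw [qPochhammer, ← prod_range_mul_prod_Ico _ h, ← qPochhammer]
  conv_rhs => rw [← mul_one (qPochhammer q T)]
  have h₁ (i : ℕ) (hi : i ∈ Ico T m) :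
      1 - q ^ (i + 1) ≡ 1 [SMOD Ideal.span {q ^ (T + 1)}] := by
    rw [SModEq.sub_mem, sub_sub_cancel_left, neg_mem_iff, Ideal.mem_span_singleton]
    exact pow_dvd_pow q (by simpa using (mem_Ico.mp hi).1)
  simpa using SModEq.rfl.mul (SModEq.prod h₁)

lemma qBinom_mul_qPochhammer_smodEq_one {T a b c : ℕ} (ha : T ≤ a) (hb : T ≤ b) (hc : T ≤ c)
    (hT : IsUnit (qPochhammer q T)) :
    qBinom q (a + b) a * qPochhammer q c ≡ 1 [SMOD Ideal.span {q ^ (T + 1)}] := by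
  obtain ⟨F, hF⟩ := hT
  have hprod : qBinom q (a + b) a * (↑F * ↑F) ≡ ↑F [SMOD Ideal.span {q ^ (T + 1)}] := by
    have h := qBinom_mul_qPochhammer (q := q) (Nat.le_add_right a b)
    rw [Nat.add_sub_cancel_left] at h
    rw [hF]
    calc qBinom q (a + b) a * (qPochhammer q T * qPochhammer q T)
        ≡ qBinom q (a + b) a * (qPochhammer q a * qPochhammer q b)
          [SMOD Ideal.span {q ^ (T + 1)}] :=
          SModEq.rfl.mul ((qPochhammer_smodEq ha).symm.mul (qPochhammer_smodEq hb).symm)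
      _ = qPochhammer q (a + b) := h
      _ ≡ qPochhammer q T [SMOD Ideal.span {q ^ (T + 1)}] := qPochhammer_smodEq (by omega)
  have hinv : qBinom q (a + b) a * F ≡ 1 [SMOD Ideal.span {q ^ (T + 1)}] := by
    rw [SModEq.sub_mem] at hprod ⊢
    rw [← F.inv_mul_cancel_left (qBinom q (a + b) a * F - 1)]
    exact Ideal.mul_mem_left _ _ (by convert hprod using 1; ring)
  rw [hF] at hinv
  exact (SModEq.rfl.mul (qPochhammer_smodEq hc)).trans hinv

end QBinomial

section FiniteGauss

variable {A : Type*} [CommRing A]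

/-- With `k = N + j`, `finiteGaussSum x N (2 * N)` is `∑_{|j| ≤ N} (-1)^j x^{j²} [2N, N + j]_{x²}`;
the odd rows `n = 2 * N + 1` are the intermediate steps of the induction on `N`. -/
def finiteGaussSum (x : A) (N n : ℕ) : A :=
  ∑ k ∈ range (n + 1), (-1) ^ (N + k) * x ^ (((k : ℤ) - N).natAbs ^ 2) * qBinom (x ^ 2) n k

lemma finiteGaussSum_odd (x : A) (N : ℕ) :
    finiteGaussSum x N (2 * N + 1) = (1 - x ^ (2 * N + 1)) * finiteGaussSum x N (2 * N) := by
  rw [finiteGaussSum, finiteGaussSum, sum_mul_qBinom_succ', mul_sum]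
  refine sum_congr rfl fun k hk ↦ ?_
  have hexp : 2 * (2 * N - k) + (((k + 1 : ℕ) : ℤ) - N).natAbs ^ 2 =
      2 * N + 1 + ((k : ℤ) - N).natAbs ^ 2 := by
    have : k ≤ 2 * N := Nat.lt_succ_iff.mp (mem_range.mp hk)
    zify [this]
    simp only [sq_abs]
    ring
  rw [← pow_mul, ← add_assoc, pow_succ (-1 : A) (N + k)]
  linear_combination -(-1) ^ (N + k) * qBinom (x ^ 2) (2 * N) k * congrArg (x ^ ·) hexp

lemma finiteGaussSum_even_succ (x : A) (N : ℕ) :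
    finiteGaussSum x (N + 1) (2 * (N + 1)) =
      (1 - x ^ (2 * N + 1)) * finiteGaussSum x N (2 * N + 1) := by
  rw [finiteGaussSum, finiteGaussSum, show 2 * (N + 1) = 2 * N + 1 + 1 by ring,
    sum_mul_qBinom_succ, mul_sum]
  refine sum_congr rfl fun k _ ↦ ?_
  have hexp₁ : (((k + 1 : ℕ) : ℤ) - (N + 1 : ℕ)).natAbs = ((k : ℤ) - N).natAbs := by
    congr 1; push_cast; ring
  have hexp₂ : 2 * k + ((k : ℤ) - (N + 1 : ℕ)).natAbs ^ 2 =
      2 * N + 1 + ((k : ℤ) - N).natAbs ^ 2 := by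
    zify
    simp only [sq_abs]
    ring
  rw [hexp₁, ← pow_mul, show N + 1 + (k + 1) = N + k + 2 by ring, pow_add (-1 : A) (N + k),
    show N + 1 + k = N + k + 1 by ring, pow_succ (-1 : A) (N + k)]
  linear_combination -(-1) ^ (N + k) * qBinom (x ^ 2) (2 * N + 1) k * congrArg (x ^ ·) hexp₂

theorem finiteGaussSum_eq (x : A) (N : ℕ) :
    finiteGaussSum x N (2 * N) = (∏ i ∈ range N, (1 - x ^ (2 * i + 1))) ^ 2 := by
  induction N with
  | zero => simp [finiteGaussSum]
  | succ N ih =>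
    rw [finiteGaussSum_even_succ, finiteGaussSum_odd, ih, prod_range_succ]
    ring

lemma sum_range_two_mul_add_one {M : Type*} [AddCommMonoid M] (g : ℕ → M) (N : ℕ) :
    ∑ k ∈ range (2 * N + 1), g k =
      g N + ∑ m ∈ range N, (g (N - (m + 1)) + g (N + (m + 1))) := by
  rw [two_mul, add_assoc, sum_range_add, sum_range_succ', ← sum_range_reflect, sum_add_distrib]
  simp only [add_zero, show ∀ m, N - 1 - m = N - (m + 1) by omega]
  abel

lemma sum_neg_one_pow_mul_pow_natAbs_sq (x : A) (N : ℕ) :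
    ∑ k ∈ range (2 * N + 1), (-1) ^ (N + k) * x ^ (((k : ℤ) - N).natAbs ^ 2) =
      ∑ m ∈ range (N + 1), (s m : A) * x ^ (m ^ 2) := by
  rw [sum_range_two_mul_add_one, sum_range_succ', add_comm (∑ _ ∈ _, _)]
  refine congrArg₂ (· + ·) (by simp [s]) ?_
  refine sum_congr rfl fun m hm ↦ ?_
  have hm : m + 1 ≤ N := mem_range.mp hm
  have h₁ : (((N - (m + 1) : ℕ) : ℤ) - N).natAbs = m + 1 := by omega
  have h₂ : (((N + (m + 1) : ℕ) : ℤ) - N).natAbs = m + 1 := by omega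
  rw [h₁, h₂, show N + (N - (m + 1)) = m + 1 + 2 * (N - (m + 1)) by omega,
    show N + (N + (m + 1)) = m + 1 + 2 * N by omega]
  simp [s, pow_add, pow_mul]
  ring

end FiniteGauss

section PowerSeries

open PowerSeries Filter Topology
open scoped PowerSeries.WithPiTopology

variable {R : Type*} [CommRing R]

lemma smodEq_X_pow_iff {f g : R⟦X⟧} {n : ℕ} :
    f ≡ g [SMOD Ideal.span {X ^ n}] ↔ ∀ d < n, coeff d f = coeff d g := by
  simp [SModEq.sub_mem, Ideal.mem_span_singleton, X_pow_dvd_iff, sub_eq_zero]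

lemma tendsto_of_forall_eventually_smodEq [TopologicalSpace R] [DiscreteTopology R] {ι : Type*}
    {l : Filter ι} {F : ι → R⟦X⟧} {f : R⟦X⟧}
    (h : ∀ n, ∀ᶠ i in l, F i ≡ f [SMOD Ideal.span {X ^ n}]) :
    Tendsto F l (𝓝 f) := by
  rw [WithPiTopology.tendsto_iff_coeff_tendsto]
  intro d
  rw [nhds_discrete, tendsto_pure]
  exact (h (d + 1)).mono fun i hi ↦ smodEq_X_pow_iff.mp hi d (lt_add_one d)

lemma Filter.Tendsto.expand [TopologicalSpace R] {ι : Type*} {l : Filter ι} {F : ι → R⟦X⟧}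
    {f : R⟦X⟧} (h : Tendsto F l (𝓝 f)) (p : ℕ) (hp : p ≠ 0) :
    Tendsto (fun i ↦ expand p hp (F i)) l (𝓝 (expand p hp f)) := by
  rw [WithPiTopology.tendsto_iff_coeff_tendsto] at h ⊢
  intro d
  simp only [coeff_expand]
  split_ifs
  · exact h _
  · exact tendsto_const_nhds

lemma coeff_sum_C_mul_X_pow {ι : Type*} (S : Finset ι) (c : ι → R) (e : ι → ℕ) (n : ℕ) :
    coeff n (∑ i ∈ S, C (c i) * X ^ e i) = ∑ i ∈ S.filter (e · = n), c i := by
  simp [sum_filter, eq_comm]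

lemma sum_C_mul_X_pow_mul_sum_C_mul_X_pow {ι κ : Type*} (S : Finset ι) (T : Finset κ)
    (a : ι → R) (b : κ → R) (e : ι → ℕ) (f : κ → ℕ) :
    (∑ i ∈ S, C (a i) * X ^ e i) * (∑ j ∈ T, C (b j) * X ^ f j) =
      ∑ x ∈ S ×ˢ T, C (a x.1 * b x.2) * X ^ (e x.1 + f x.2) := by
  rw [sum_mul_sum, sum_product]
  refine sum_congr rfl fun i _ ↦ sum_congr rfl fun j _ ↦ ?_
  rw [map_mul, pow_add]
  ring

lemma mk_smodEq_sum (f : ℕ → R) {n N : ℕ} (h : n ≤ N) :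
    mk f ≡ ∑ i ∈ range N, C (f i) * X ^ i [SMOD Ideal.span {X ^ n}] := by
  refine smodEq_X_pow_iff.mpr fun d hd ↦ ?_
  rw [coeff_sum_C_mul_X_pow, filter_eq', if_pos (mem_range.mpr (by omega)), sum_singleton,
    coeff_mk]

lemma SModEq.expand {f g : R⟦X⟧} {n : ℕ} (h : f ≡ g [SMOD Ideal.span {X ^ n}]) (p : ℕ)
    (hp : p ≠ 0) :
    expand p hp f ≡ expand p hp g [SMOD Ideal.span {X ^ n}] := by
  rw [SModEq.sub_mem, Ideal.mem_span_singleton] at h ⊢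
  obtain ⟨c, hc⟩ := h
  rw [← map_sub, hc, map_mul, map_pow, expand_X, ← pow_mul]
  exact (pow_dvd_pow X (Nat.le_mul_of_pos_left n (Nat.pos_of_ne_zero hp))).mul_right _

lemma isUnit_qPochhammer {q : R⟦X⟧} (hq : constantCoeff q = 0) (n : ℕ) :
    IsUnit (qPochhammer q n) :=
  isUnit_iff_constantCoeff.mpr (by simp [qPochhammer, map_prod, hq])

lemma finiteGaussSum_mul_qPochhammer_smodEq {n N : ℕ} (h : n ≤ N) :
    finiteGaussSum (X : R⟦X⟧) N (2 * N) * qPochhammer (X ^ 2) N ≡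
      ∑ m ∈ range (N + 1), C (s m : R) * X ^ (m ^ 2) [SMOD Ideal.span {X ^ n}] := by
  simp only [map_intCast]
  rw [← sum_neg_one_pow_mul_pow_natAbs_sq, finiteGaussSum, sum_mul]
  refine SModEq.sum fun k hk ↦ ?_
  have hk : k ≤ 2 * N := Nat.lt_succ_iff.mp (mem_range.mp hk)
  set j := ((k : ℤ) - N).natAbs
  rw [mul_assoc]
  conv_rhs => rw [← mul_one ((-1) ^ (N + k) * (X : R⟦X⟧) ^ j ^ 2)]
  by_cases hj : n ≤ j ^ 2
  · rw [SModEq.sub_mem, ← mul_sub, Ideal.mem_span_singleton]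
    exact ((pow_dvd_pow X hj).mul_left _).mul_right _
  · have hn : n ≤ 2 * (N - j + 1) := by
      have : 2 * j ≤ j ^ 2 + 1 := by nlinarith [sq_nonneg ((j : ℤ) - 1)]
      omega
    have hbinom := qBinom_mul_qPochhammer_smodEq_one (q := (X : R⟦X⟧) ^ 2) (a := k)
      (b := 2 * N - k) (c := N) (T := N - j) (by omega) (by omega) (by omega)
      (isUnit_qPochhammer (by simp) _)
    rw [Nat.add_sub_cancel' hk, ← pow_mul] at hbinom
    exact SModEq.rfl.mul
      (hbinom.mono (Ideal.span_singleton_le_span_singleton.mpr (pow_dvd_pow X hn)))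

/-- `θ = ∑ₘ s m X^{m²}`. -/
def theta : R⟦X⟧ := mk fun d ↦ ∑ m ∈ (range (d + 1)).filter (· ^ 2 = d), (s m : R)

lemma theta_smodEq {n N : ℕ} (h : n ≤ N) :
    theta ≡ ∑ m ∈ range N, C (s m : R) * X ^ (m ^ 2) [SMOD Ideal.span {X ^ n}] := by
  refine smodEq_X_pow_iff.mpr fun d hd ↦ ?_
  have hsub : range (d + 1) ⊆ range N := range_subset_range.mpr (by omega)
  simp only [theta, coeff_mk, map_sum, coeff_C_mul_X_pow, sum_filter]
  simp only [eq_comm (a := d)]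
  refine sum_subset hsub fun m _ hm ↦ if_neg fun hdm ↦ hm (mem_range.mpr (by nlinarith))

lemma prod_range_two_mul_one_sub_X_pow (N : ℕ) :
    ∏ i ∈ range (2 * N), (1 - (X : R⟦X⟧) ^ (i + 1)) =
      (∏ i ∈ range N, (1 - X ^ (2 * i + 1))) * qPochhammer (X ^ 2) N := by
  induction N with
  | zero => simp
  | succ N ih =>
    rw [show 2 * (N + 1) = 2 * N + 1 + 1 by ring, prod_range_succ, prod_range_succ, ih,
      prod_range_succ, qPochhammer_succ, ← pow_mul]
    ring

theorem theta_mul_expand_tprod [TopologicalSpace R] [DiscreteTopology R] :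
    theta * expand 2 two_ne_zero (∏' i, (1 - X ^ (i + 1) : R⟦X⟧)) =
      (∏' i, (1 - X ^ (i + 1) : R⟦X⟧)) ^ 2 := by
  have hE := (WithPiTopology.multipliable_one_sub_X_pow R).hasProd.tendsto_prod_nat
  have hfinite : ∀ N, (∏ i ∈ range (2 * N), (1 - (X : R⟦X⟧) ^ (i + 1))) ^ 2 =
      finiteGaussSum X N (2 * N) * qPochhammer (X ^ 2) N *
        expand 2 two_ne_zero (∏ i ∈ range N, (1 - X ^ (i + 1))) := fun N ↦ by
    simp only [prod_range_two_mul_one_sub_X_pow, finiteGaussSum_eq, map_prod, map_sub, map_one,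
      map_pow, expand_X, qPochhammer]
    ring
  have hV : Tendsto (fun N ↦ finiteGaussSum (X : R⟦X⟧) N (2 * N) * qPochhammer (X ^ 2) N)
      atTop (𝓝 theta) :=
    tendsto_of_forall_eventually_smodEq fun n ↦ eventually_atTop.mpr ⟨n, fun N hN ↦
      (finiteGaussSum_mul_qPochhammer_smodEq hN).trans (theta_smodEq (by omega)).symm⟩
  have hE₂ := (hE.comp (tendsto_id.const_mul_atTop' two_pos)).pow 2
  exact tendsto_nhds_unique
    ((hV.mul (hE.expand 2 two_ne_zero)).congr fun N ↦ (hfinite N).symm) hE₂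

def partitionSeries (R : Type*) [CommRing R] : R⟦X⟧ := mk fun n ↦ (p n : R)

theorem partitionSeries_mul_tprod_one_sub_X_pow [TopologicalSpace R] [DiscreteTopology R] :
    partitionSeries R * ∏' i, (1 - X ^ (i + 1) : R⟦X⟧) = 1 := by
  have h := (Nat.Partition.hasProd_powerSeriesMk_card_restricted R fun _ ↦ True).mul
    (WithPiTopology.multipliable_one_sub_X_pow R).hasProd
  have hgeom (i : ℕ) :
      (if True then ∑' j, (X : R⟦X⟧) ^ ((i + 1) * j) else 1) * (1 - X ^ (i + 1)) = 1 := by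
    simp only [if_true, pow_mul]
    exact WithPiTopology.tsum_pow_mul_one_sub_of_constantCoeff_eq_zero (by simp)
  simp only [hgeom] at h
  convert h.unique hasProd_one using 3 with n
  simp [partitionSeries, p, Nat.Partition.restricted]

theorem theta_mul_partitionSeries_pow_three (R : Type*) [CommRing R] :
    theta * partitionSeries R ^ 3 =
      partitionSeries R * expand 2 two_ne_zero (partitionSeries R) := by
  let _ : TopologicalSpace R := ⊥
  have : DiscreteTopology R := ⟨rfl⟩
  set P := partitionSeries R
  set E := ∏' i, (1 - X ^ (i + 1) : R⟦X⟧)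
  have hPE : P * E = 1 := partitionSeries_mul_tprod_one_sub_X_pow
  have hPE₂ : expand 2 two_ne_zero P * expand 2 two_ne_zero E = 1 := by
    rw [← map_mul, hPE, map_one]
  calc theta * P ^ 3
      = theta * P ^ 3 * (expand 2 two_ne_zero P * expand 2 two_ne_zero E) := by rw [hPE₂, mul_one]
    _ = theta * expand 2 two_ne_zero E * P ^ 3 * expand 2 two_ne_zero P := by ring
    _ = (P * E) ^ 2 * P * expand 2 two_ne_zero P := by rw [theta_mul_expand_tprod]; ring
    _ = P * expand 2 two_ne_zero P := by rw [hPE]; ring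

lemma coeff_partitionSeries_mul_expand_two (n : ℕ) :
    coeff n (partitionSeries R * expand 2 two_ne_zero (partitionSeries R)) = p₂ n := by
  have hP := mk_smodEq_sum (fun i ↦ (p i : R)) (le_refl (n + 1))
  rw [partitionSeries, smodEq_X_pow_iff.mp (hP.mul (hP.expand 2 two_ne_zero)) n (lt_add_one n)]
  simp only [map_sum, map_mul, expand_C, map_pow, expand_X, ← pow_mul]
  rw [sum_C_mul_X_pow_mul_sum_C_mul_X_pow, coeff_sum_C_mul_X_pow, p₂]
  push_cast
  rfl

lemma coeff_theta_mul_partitionSeries_pow_three (n : ℕ) :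
    coeff n (theta * partitionSeries R ^ 3) =
      ∑ x ∈ ((range (n + 1) ×ˢ range (n + 1)) ×ˢ (range (n + 1) ×ˢ range (n + 1))).filter
          (fun x => x.1.1 ^ 2 + x.1.2 + x.2.1 + x.2.2 = n),
        (s x.1.1 : R) * (p x.1.2 * p x.2.1 * p x.2.2) := by
  have hP := mk_smodEq_sum (fun i ↦ (p i : R)) (le_refl (n + 1))
  have hθ := theta_smodEq (R := R) (le_refl (n + 1))
  rw [partitionSeries, pow_three, ← mul_assoc,
    smodEq_X_pow_iff.mp ((hθ.mul hP).mul (hP.mul hP)) n (lt_add_one n),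
    sum_C_mul_X_pow_mul_sum_C_mul_X_pow, sum_C_mul_X_pow_mul_sum_C_mul_X_pow,
    sum_C_mul_X_pow_mul_sum_C_mul_X_pow, coeff_sum_C_mul_X_pow]
  exact sum_congr (by simp only [add_assoc]) fun x _ ↦ by ring

end PowerSeries

theorem cubicPartition_eq_sum (n : ℕ) :
    (p₂ n : ℤ) =
      ∑ x ∈ ((range (n + 1) ×ˢ range (n + 1)) ×ˢ (range (n + 1) ×ˢ range (n + 1))).filter
          (fun x => x.1.1 ^ 2 + x.1.2 + x.2.1 + x.2.2 = n),
        s x.1.1 * (p x.1.2 * p x.2.1 * p x.2.2) := by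
  have key := congrArg (PowerSeries.coeff n) (theta_mul_partitionSeries_pow_three ℤ)
  rw [coeff_theta_mul_partitionSeries_pow_three, coeff_partitionSeries_mul_expand_two] at key
  simpa using key.symm
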